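/- Let H be a hyperplane supporting a convex body C in ℍ^d, let j be a point of C farthest from H, let h be the orthogonal projection of j onto H, and let J be the hyperplane through j orthogonal to the geodesic segment jh. Then J supports C at j, and moreover J ∩ C = {j}. -/

import Mathlib

noncomputable section

namespace HypSpace

/-- Inverse hyperbolic cosine. -/
def arcosh (x : ℝ) : ℝ := Real.log (x + Real.sqrt (x ^ 2 - 1))

/-- The Minkowski bilinear form on `ℝ^{d+1}` (signature `(d,1)`, the last
coordinate being timelike). -/
def mink (d : ℕ) (x y : EuclideanSpace ℝ (Fin (d + 1))) : ℝ :=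
  (∑ i : Fin d, x i.castSucc * y i.castSucc) - x (Fin.last d) * y (Fin.last d)

/-- The hyperboloid model of `d`-dimensional hyperbolic space: the upper sheet
of the two-sheeted hyperboloid `mink x x = -1`. -/
def Pt (d : ℕ) : Type := {x : EuclideanSpace ℝ (Fin (d + 1)) // mink d x x = -1 ∧ 0 < x (Fin.last d)}

variable {d : ℕ}

/-- Hyperbolic distance between two points of `ℍ^d`. -/
def hdist (p q : Pt d) : ℝ := arcosh (-(mink d p.1 q.1))

/-- The geodesic segment between `a` and `b`, described metrically via betweenness
(hyperbolic space is uniquely geodesic). -/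
def seg (a b : Pt d) : Set (Pt d) := {p | hdist a p + hdist p b = hdist a b}

/-- A set is (geodesically) convex if it contains the segment between any two of its points. -/
def IsConvexSet (C : Set (Pt d)) : Prop := ∀ a ∈ C, ∀ b ∈ C, seg a b ⊆ C

/-- The convex hull: the smallest convex set containing `A`. -/
def chull (A : Set (Pt d)) : Set (Pt d) := ⋂₀ {C | IsConvexSet C ∧ A ⊆ C}

/-- The totally geodesic hyperplane with (spacelike) normal vector `v`. -/
def plane (v : EuclideanSpace ℝ (Fin (d + 1))) : Set (Pt d) := {p | mink d v p.1 = 0}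

/-- A hyperplane of `ℍ^d`: the trace on the hyperboloid of a linear hyperplane
with spacelike unit normal. -/
def IsHyperplane (H : Set (Pt d)) : Prop := ∃ v, mink d v v = 1 ∧ H = plane v

/-- Distance from a point to a set. -/
def distPS (p : Pt d) (S : Set (Pt d)) : ℝ := sInf (hdist p '' S)

/-- Distance between two sets. -/
def distSS (A B : Set (Pt d)) : ℝ := sInf {r | ∃ a ∈ A, ∃ b ∈ B, hdist a b = r}

/-- `h` is the orthogonal projection of `g` onto `H`: the point of `H`
realizing the distance from `g` to `H`.  For a hyperplane `H` with `a ∈ H`,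
`IsProj b H a` also expresses that `H` is orthogonal to the segment `ab` at `a`. -/
def IsProj (g : Pt d) (H : Set (Pt d)) (h : Pt d) : Prop :=
  h ∈ H ∧ ∀ k ∈ H, hdist g h ≤ hdist g k

/-- Two hyperplanes are ultraparallel if they are disjoint and not asymptotically
parallel (their distance is positive, i.e. they admit a common perpendicular). -/
def Ultraparallel (H J : Set (Pt d)) : Prop :=
  IsHyperplane H ∧ IsHyperplane J ∧ H ∩ J = ∅ ∧ 0 < distSS H J

/-- `p` is an interior point of `C`. -/
def IsIntr (C : Set (Pt d)) (p : Pt d) : Prop := ∃ ε > 0, ∀ q, hdist p q < ε → q ∈ C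

/-- `p` is a boundary point of the (closed) set `C`. -/
def IsBdry (C : Set (Pt d)) (p : Pt d) : Prop := p ∈ C ∧ ¬ IsIntr C p

/-- `C` is bounded. -/
def IsBddSet (C : Set (Pt d)) : Prop := ∃ R, ∀ a ∈ C, ∀ b ∈ C, hdist a b ≤ R

/-- `C` is closed. -/
def IsClosedSet (C : Set (Pt d)) : Prop :=
  ∀ p : Pt d, (∀ ε > 0, ∃ q ∈ C, hdist p q < ε) → p ∈ C

/-- A convex body: a compact (closed and bounded) convex set with nonempty interior. -/
def IsBody (C : Set (Pt d)) : Prop :=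
  IsConvexSet C ∧ IsBddSet C ∧ IsClosedSet C ∧ ∃ p, IsIntr C p

/-- The hyperplane `H` supports `C`: it meets `C` but misses its interior. -/
def Supports (H C : Set (Pt d)) : Prop :=
  IsHyperplane H ∧ (H ∩ C).Nonempty ∧ ∀ p, IsIntr C p → p ∉ H

/-- The width of `C` determined by `H`, as the maximum distance from `H`
to a point of `C`. -/
def width (H C : Set (Pt d)) : ℝ := sSup ((fun c => distPS c H) '' C)

/-- The width of `C` determined by `H`, as the distance from `H` to a farthest
supporting hyperplane of `C` ultraparallel to `H`. -/
def widthUP (H C : Set (Pt d)) : ℝ :=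
  sSup {r | ∃ J, Supports J C ∧ Ultraparallel H J ∧ distSS H J = r}

/-- The thickness of `C`: the minimum width over supporting hyperplanes. -/
def thickness (C : Set (Pt d)) : ℝ := sInf {r | ∃ H, Supports H C ∧ width H C = r}

/-- The diameter of `C`. -/
def diam (C : Set (Pt d)) : ℝ := sSup {r | ∃ a ∈ C, ∃ b ∈ C, hdist a b = r}

/-- A body of constant width `δ`. -/
def ConstWidth (W : Set (Pt d)) (δ : ℝ) : Prop :=
  IsBody W ∧ ∀ H, Supports H W → width H W = δ

/-- A complete set of diameter `δ`. -/
def CompleteSet (C : Set (Pt d)) (δ : ℝ) : Prop :=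
  diam C = δ ∧ ∀ x, x ∉ C → diam (C ∪ {x}) > δ

/-- A body of constant diameter `δ`. -/
def ConstDiam (C : Set (Pt d)) (δ : ℝ) : Prop :=
  diam C = δ ∧ ∀ p, IsBdry C p → ∃ p' ∈ C, hdist p p' = δ

/-!
In the hyperboloid model the distance from `p` to the hyperplane with unit normal `v` is
`arcosh √(1 + (mink v p)²)`, so the farthest point `j` maximizes `(mink v ·)²` on `C`, and
`α = mink v j ≠ 0` because an interior point of `C` lies off `H`. The foot of `j` on `H` is
`h = (j - α v) / √(1 + α²)`, and the hyperplane through `j` perpendicular to `jh` is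
`J = {p | α mink j p + mink v p = 0}`. On `J`, `(mink v p)² = α² (mink j p)² > α²` unless `p = j`,
by the reverse Cauchy–Schwarz inequality `mink j p ≤ -1`; hence `J ∩ C = {j}`. Finally `j` is not
interior: moving from `j` along the geodesic normal to `H`, away from `H`, increases `(mink v ·)²`.
-/

lemma arcosh_eq_real_arcosh : arcosh = Real.arcosh := rfl

section Minkowski

variable (x y z : EuclideanSpace ℝ (Fin (d + 1)))

lemma mink_comm : mink d x y = mink d y x := by
  simp only [mink, mul_comm]

lemma mink_add_left : mink d (x + y) z = mink d x z + mink d y z := by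
  simp only [mink, PiLp.add_apply, add_mul, Finset.sum_add_distrib]; ring

lemma mink_smul_left (a : ℝ) : mink d (a • x) y = a * mink d x y := by
  simp only [mink, PiLp.smul_apply, smul_eq_mul, mul_assoc, ← Finset.mul_sum]; ring

lemma mink_sub_left : mink d (x - y) z = mink d x z - mink d y z := by
  simp only [mink, PiLp.sub_apply, sub_mul, Finset.sum_sub_distrib]; ring

lemma mink_neg_left : mink d (-x) y = -mink d x y := by
  simp only [mink, PiLp.neg_apply, neg_mul, Finset.sum_neg_distrib]; ring

lemma mink_add_right : mink d x (y + z) = mink d x y + mink d x z := by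
  rw [mink_comm, mink_add_left, mink_comm y, mink_comm z]

lemma mink_smul_right (a : ℝ) : mink d x (a • y) = a * mink d x y := by
  rw [mink_comm, mink_smul_left, mink_comm]

lemma mink_sub_right : mink d x (y - z) = mink d x y - mink d x z := by
  rw [mink_comm, mink_sub_left, mink_comm y, mink_comm z]

lemma mink_neg_right : mink d x (-y) = -mink d x y := by
  rw [mink_comm, mink_neg_left, mink_comm]

end Minkowski

lemma sq_last_of_mink_self {x : EuclideanSpace ℝ (Fin (d + 1))} (hx : mink d x x = -1) :
    x (Fin.last d) ^ 2 = 1 + ∑ i : Fin d, x i.castSucc ^ 2 := by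
  simp only [mink, ← sq] at hx; linarith

namespace Pt

/-- The core of the reverse Cauchy–Schwarz inequality `mink p q ≤ -1`, keeping the defect
`|p' - q'|²` of the spatial parts for the equality case. -/
lemma one_add_sum_sq_add_sum_sub_sq_le (p q : Pt d) :
    (1 + ∑ i : Fin d, p.1 i.castSucc * q.1 i.castSucc) ^ 2
      + ∑ i : Fin d, (p.1 i.castSucc - q.1 i.castSucc) ^ 2
      ≤ (p.1 (Fin.last d) * q.1 (Fin.last d)) ^ 2 := by
  have hcs := Finset.sum_mul_sq_le_sq_mul_sq Finset.univ
    (fun i : Fin d => p.1 i.castSucc) (fun i => q.1 i.castSucc)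
  have hsub : ∑ i : Fin d, (p.1 i.castSucc - q.1 i.castSucc) ^ 2
      = ∑ i : Fin d, p.1 i.castSucc ^ 2 - 2 * ∑ i : Fin d, p.1 i.castSucc * q.1 i.castSucc
        + ∑ i : Fin d, q.1 i.castSucc ^ 2 := by
    simp only [sub_sq, Finset.sum_add_distrib, Finset.sum_sub_distrib, Finset.mul_sum, mul_assoc]
  rw [mul_pow, sq_last_of_mink_self p.2.1, sq_last_of_mink_self q.2.1, hsub]
  nlinarith [hcs]

lemma mink_le_neg_one (p q : Pt d) : mink d p.1 q.1 ≤ -1 := by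
  have key := one_add_sum_sq_add_sum_sub_sq_le p q
  have hsub : 0 ≤ ∑ i : Fin d, (p.1 i.castSucc - q.1 i.castSucc) ^ 2 :=
    Finset.sum_nonneg fun i _ => sq_nonneg _
  have hpos : 0 ≤ p.1 (Fin.last d) * q.1 (Fin.last d) := (mul_pos p.2.2 q.2.2).le
  simp only [mink]; nlinarith

lemma eq_of_mink_eq_neg_one {p q : Pt d} (h : mink d p.1 q.1 = -1) : p = q := by
  have key := one_add_sum_sq_add_sum_sub_sq_le p q
  simp only [mink] at h
  rw [show 1 + ∑ i : Fin d, p.1 i.castSucc * q.1 i.castSucc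
    = p.1 (Fin.last d) * q.1 (Fin.last d) by linarith] at key
  have hsum : ∑ i : Fin d, (p.1 i.castSucc - q.1 i.castSucc) ^ 2 = 0 :=
    le_antisymm (by linarith) (Finset.sum_nonneg fun i _ => sq_nonneg _)
  have hspatial : ∀ k : Fin d, p.1 k.castSucc = q.1 k.castSucc := fun k =>
    sub_eq_zero.1 <| pow_eq_zero_iff two_ne_zero |>.1 <|
      (Finset.sum_eq_zero_iff_of_nonneg fun i _ => sq_nonneg _).1 hsum k (Finset.mem_univ k)
  have hlast : p.1 (Fin.last d) ^ 2 = q.1 (Fin.last d) ^ 2 := by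
    simp only [sq_last_of_mink_self p.2.1, sq_last_of_mink_self q.2.1, hspatial]
  refine Subtype.ext <| PiLp.ext fun i => Fin.lastCases ?_ hspatial i
  exact (sq_eq_sq₀ p.2.2.le q.2.2.le).1 hlast

/-- Otherwise `-x` would be a point of `Pt d` pairing positively with `p`. -/
lemma last_pos_of_mink_neg (p : Pt d) {x : EuclideanSpace ℝ (Fin (d + 1))}
    (hx : mink d x x = -1) (hpx : mink d p.1 x < 0) : 0 < x (Fin.last d) := by
  have hne : x (Fin.last d) ≠ 0 := by
    intro h0
    have := sq_last_of_mink_self hx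
    rw [h0] at this
    nlinarith [Finset.sum_nonneg fun (i : Fin d) (_ : i ∈ Finset.univ) => sq_nonneg (x i.castSucc)]
  by_contra hle
  have hneg : mink d (-x) (-x) = -1 := by rw [mink_neg_left, mink_neg_right, neg_neg, hx]
  have := mink_le_neg_one p ⟨-x, hneg, by
    rw [PiLp.neg_apply]; exact neg_pos.2 (lt_of_le_of_ne (not_lt.1 hle) hne)⟩
  rw [mink_neg_right] at this
  linarith

lemma one_le_neg_mink (p q : Pt d) : 1 ≤ -mink d p.1 q.1 := by
  linarith [mink_le_neg_one p q]

end Pt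

lemma hdist_self (p : Pt d) : hdist p p = 0 := by
  simp [hdist, p.2.1, arcosh_eq_real_arcosh]

lemma hdist_le_hdist_iff {p q p' q' : Pt d} :
    hdist p q ≤ hdist p' q' ↔ -mink d p.1 q.1 ≤ -mink d p'.1 q'.1 :=
  Real.arcosh_le_arcosh (by linarith [Pt.one_le_neg_mink p q])
    (by linarith [Pt.one_le_neg_mink p' q'])

lemma IsIntr.mem {C : Set (Pt d)} {p : Pt d} (h : IsIntr C p) : p ∈ C := by
  obtain ⟨ε, hε, hball⟩ := h
  exact hball p (by rwa [hdist_self])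

section Foot

variable {v : EuclideanSpace ℝ (Fin (d + 1))}

lemma mink_sub_smul_self (hv : mink d v v = 1) (g : Pt d) :
    mink d (g.1 - mink d v g.1 • v) (g.1 - mink d v g.1 • v) = -(1 + mink d v g.1 ^ 2) := by
  simp only [mink_sub_left, mink_sub_right, mink_smul_left, mink_smul_right, g.2.1, hv,
    mink_comm g.1 v]
  ring

def foot (hv : mink d v v = 1) (g : Pt d) : Pt d :=
  have hβ : √(1 + mink d v g.1 ^ 2) ^ 2 = 1 + mink d v g.1 ^ 2 := Real.sq_sqrt (by positivity)
  have hβ0 : 0 < √(1 + mink d v g.1 ^ 2) := by positivity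
  have hff : mink d ((√(1 + mink d v g.1 ^ 2))⁻¹ • (g.1 - mink d v g.1 • v))
      ((√(1 + mink d v g.1 ^ 2))⁻¹ • (g.1 - mink d v g.1 • v)) = -1 := by
    rw [mink_smul_left, mink_smul_right, mink_sub_smul_self hv]
    field_simp
    linarith
  have hgf : mink d g.1 ((√(1 + mink d v g.1 ^ 2))⁻¹ • (g.1 - mink d v g.1 • v))
      = -√(1 + mink d v g.1 ^ 2) := by
    rw [mink_smul_right, mink_sub_right, mink_smul_right, g.2.1, mink_comm g.1 v]
    field_simp
    linarith
  ⟨_, hff, Pt.last_pos_of_mink_neg g hff (by rw [hgf]; linarith)⟩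

variable (hv : mink d v v = 1) (g : Pt d)

lemma sqrt_smul_foot : √(1 + mink d v g.1 ^ 2) • (foot hv g).1 = g.1 - mink d v g.1 • v :=
  smul_inv_smul₀ (by positivity) _

lemma foot_mem_plane : foot hv g ∈ plane v := by
  show mink d v (foot hv g).1 = 0
  have := congrArg (mink d v) (sqrt_smul_foot hv g)
  rw [mink_smul_right, mink_sub_right, mink_smul_right, hv] at this
  exact (mul_eq_zero.1 (this.trans (by ring))).resolve_left (by positivity)

lemma mink_foot : mink d g.1 (foot hv g).1 = -√(1 + mink d v g.1 ^ 2) := by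
  have hβ : √(1 + mink d v g.1 ^ 2) ^ 2 = 1 + mink d v g.1 ^ 2 := Real.sq_sqrt (by positivity)
  have := congrArg (mink d g.1) (sqrt_smul_foot hv g)
  rw [mink_smul_right, mink_sub_right, mink_smul_right, g.2.1, mink_comm g.1 v] at this
  refine mul_left_cancel₀ (ne_of_gt (by positivity : 0 < √(1 + mink d v g.1 ^ 2))) ?_
  rw [this]; linarith

lemma mink_eq_mul_mink_foot {k : Pt d} (hk : k ∈ plane v) :
    mink d g.1 k.1 = √(1 + mink d v g.1 ^ 2) * mink d (foot hv g).1 k.1 := by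
  rw [← mink_smul_left, sqrt_smul_foot, mink_sub_left, mink_smul_left,
    show mink d v k.1 = 0 from hk, mul_zero, sub_zero]

lemma hdist_foot_le {k : Pt d} (hk : k ∈ plane v) : hdist g (foot hv g) ≤ hdist g k := by
  rw [hdist_le_hdist_iff, mink_foot, mink_eq_mul_mink_foot hv g hk, neg_neg, ← mul_neg]
  exact le_mul_of_one_le_right (by positivity) (Pt.one_le_neg_mink _ _)

lemma eq_foot_of_isProj {k : Pt d} (hk : IsProj g (plane v) k) : k = foot hv g := by
  have hle := hk.2 _ (foot_mem_plane hv g)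
  rw [hdist_le_hdist_iff, mink_foot, mink_eq_mul_mink_foot hv g hk.1, neg_neg, ← mul_neg] at hle
  have hβ : 0 < √(1 + mink d v g.1 ^ 2) := by positivity
  refine (Pt.eq_of_mink_eq_neg_one (le_antisymm (Pt.mink_le_neg_one _ _) ?_)).symm
  nlinarith [mul_le_mul_of_nonneg_left hle hβ.le]

end Foot

lemma distPS_plane {v : EuclideanSpace ℝ (Fin (d + 1))} (hv : mink d v v = 1) (g : Pt d) :
    distPS g (plane v) = arcosh √(1 + mink d v g.1 ^ 2) := by
  have hleast : IsLeast (hdist g '' plane v) (hdist g (foot hv g)) :=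
    ⟨⟨_, foot_mem_plane hv g, rfl⟩, by rintro _ ⟨k, hk, rfl⟩; exact hdist_foot_le hv g hk⟩
  rw [distPS, hleast.csInf_eq, hdist, mink_foot, neg_neg]

lemma distPS_plane_le_iff {v : EuclideanSpace ℝ (Fin (d + 1))} (hv : mink d v v = 1)
    (p q : Pt d) :
    distPS p (plane v) ≤ distPS q (plane v) ↔ mink d v p.1 ^ 2 ≤ mink d v q.1 ^ 2 := by
  rw [distPS_plane hv, distPS_plane hv, arcosh_eq_real_arcosh,
    Real.arcosh_le_arcosh (by positivity) (by positivity), Real.sqrt_le_sqrt_iff (by positivity),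
    add_le_add_iff_left]

/-- With `f` the foot of `g` on `plane v` and `α = mink v g`, both `u` and `α g + v` are
proportional to `f + (mink g f) g`, the normal at `g` of the plane perpendicular to `gf`. -/
lemma plane_eq_of_foot_foot {v u : EuclideanSpace ℝ (Fin (d + 1))} (hv : mink d v v = 1)
    (hu : mink d u u = 1) {g : Pt d} (hα : mink d v g.1 ≠ 0) (hg : foot hu (foot hv g) = g) :
    plane u = {p | mink d v g.1 * mink d g.1 p.1 + mink d v p.1 = 0} := by
  set f := foot hv g
  set α := mink d v g.1
  set γ := mink d u f.1
  have hβ : √(1 + α ^ 2) ^ 2 = 1 + α ^ 2 := Real.sq_sqrt (by positivity)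
  have hδ : √(1 + γ ^ 2) ^ 2 = 1 + γ ^ 2 := Real.sq_sqrt (by positivity)
  have hβ0 : 0 < √(1 + α ^ 2) := by positivity
  have hδβ : √(1 + γ ^ 2) = √(1 + α ^ 2) := by
    have h1 := mink_foot hu f
    rw [hg, mink_comm, mink_foot hv g] at h1
    linarith
  have hγ : γ ≠ 0 := by
    intro h0
    have h1 : √(1 + α ^ 2) = 1 := by rw [← hδβ, h0]; norm_num
    exact hα (pow_eq_zero_iff two_ne_zero |>.1 (by nlinarith))
  ext p
  have hf : √(1 + α ^ 2) * mink d f.1 p.1 = mink d g.1 p.1 - α * mink d v p.1 := by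
    rw [← mink_smul_left, sqrt_smul_foot, mink_sub_left, mink_smul_left]
  have hgp : √(1 + α ^ 2) * mink d g.1 p.1 = mink d f.1 p.1 - γ * mink d u p.1 := by
    rw [← hδβ, ← mink_smul_left, ← hg, sqrt_smul_foot, mink_sub_left, mink_smul_left]
  have key : √(1 + α ^ 2) * γ * mink d u p.1 = -α * (α * mink d g.1 p.1 + mink d v p.1) := by
    linear_combination √(1 + α ^ 2) * hgp + hf - mink d g.1 p.1 * hβ
  change mink d u p.1 = 0 ↔ _
  constructor
  · intro h0
    rw [h0, mul_zero] at key
    exact (mul_eq_zero.1 key.symm).resolve_left (neg_ne_zero.2 hα)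
  · intro h0
    rw [h0, mul_zero] at key
    exact (mul_eq_zero.1 key).resolve_left (mul_ne_zero hβ0.ne' hγ)

lemma sq_mink_lt_of_ne {v : EuclideanSpace ℝ (Fin (d + 1))} {g p : Pt d}
    (hα : mink d v g.1 ≠ 0) (hp : mink d v g.1 * mink d g.1 p.1 + mink d v p.1 = 0)
    (hne : p ≠ g) : mink d v g.1 ^ 2 < mink d v p.1 ^ 2 := by
  have hlt : mink d g.1 p.1 < -1 :=
    (Pt.mink_le_neg_one g p).lt_of_ne fun h => hne (Pt.eq_of_mink_eq_neg_one h).symm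
  have hα2 : 0 < mink d v g.1 ^ 2 := by positivity
  rw [show mink d v p.1 = -(mink d v g.1 * mink d g.1 p.1) by linarith]
  nlinarith [mul_pos hα2 (show 0 < mink d g.1 p.1 ^ 2 - 1 by nlinarith)]

/-- Moving from `g` away from `plane v` along the geodesic normal to it: the point
`cosh τ • g + sinh τ • t`, with `t` the unit tangent at `g` proportional to `α g + v`. -/
lemma exists_hdist_lt_sq_mink_lt {v : EuclideanSpace ℝ (Fin (d + 1))} (hv : mink d v v = 1)
    {g : Pt d} (hα : mink d v g.1 ≠ 0) {ε : ℝ} (hε : 0 < ε) :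
    ∃ q : Pt d, hdist g q < ε ∧ mink d v g.1 ^ 2 < mink d v q.1 ^ 2 := by
  set α := mink d v g.1
  set β := √(1 + α ^ 2)
  have hβ : β ^ 2 = 1 + α ^ 2 := Real.sq_sqrt (by positivity)
  have hβ0 : 0 < β := by positivity
  obtain ⟨τ, hτε, hατ⟩ : ∃ τ, |τ| < ε ∧ 0 < α * Real.sinh τ := by
    rcases hα.lt_or_gt with hneg | hpos
    · refine ⟨-(ε / 2), by rw [abs_neg, abs_of_pos (by positivity)]; linarith, ?_⟩
      exact mul_pos_of_neg_of_neg hneg (Real.sinh_neg_iff.2 (by linarith))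
    · exact ⟨ε / 2, by rw [abs_of_pos (by positivity)]; linarith,
        mul_pos hpos (Real.sinh_pos_iff.2 (by positivity))⟩
  set t := α • g.1 + v
  have hgt : mink d g.1 t = 0 := by
    simp only [t, mink_add_right, mink_smul_right, g.2.1, mink_comm g.1 v]; ring
  have htt : mink d t t = β ^ 2 := by
    simp only [t, mink_add_left, mink_add_right, mink_smul_left, mink_smul_right, g.2.1, hv,
      mink_comm g.1 v, hβ]
    ring
  have hvt : mink d v t = β ^ 2 := by
    simp only [t, mink_add_right, mink_smul_right, hv, hβ]; ring
  set x := Real.cosh τ • g.1 + (Real.sinh τ / β) • t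
  have hgx : mink d g.1 x = -Real.cosh τ := by
    simp only [x, mink_add_right, mink_smul_right, g.2.1, hgt]; ring
  have hxx : mink d x x = -1 := by
    simp only [x, mink_add_left, mink_add_right, mink_smul_left, mink_smul_right, g.2.1, hgt,
      mink_comm t g.1, htt]
    have hs : Real.sinh τ / β * (Real.sinh τ / β * β ^ 2) = Real.sinh τ ^ 2 := by field_simp
    linear_combination hs - Real.cosh_sq τ
  have hvx : mink d v x = α * Real.cosh τ + β * Real.sinh τ := by
    simp only [x, mink_add_right, mink_smul_right, hvt]
    field_simp
    rfl
  refine ⟨⟨x, hxx, Pt.last_pos_of_mink_neg g hxx (by rw [hgx]; linarith [Real.cosh_pos τ])⟩,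
    ?_, ?_⟩
  · show arcosh (-mink d g.1 x) < ε
    rw [hgx, neg_neg, arcosh_eq_real_arcosh, ← Real.arcosh_cosh hε.le,
      Real.arcosh_lt_arcosh (Real.cosh_pos τ) (Real.cosh_pos ε), Real.cosh_lt_cosh,
      abs_of_pos hε]
    exact hτε
  · show α ^ 2 < mink d v x ^ 2
    rw [hvx]
    nlinarith [Real.cosh_sq τ, Real.one_le_cosh τ, mul_pos hβ0 hατ, sq_nonneg (β * Real.sinh τ)]

/-- Lemma 3: the hyperplane through a farthest point `j` of `C`
from `H`, orthogonal to the segment `jh`, supports `C` and meets it only at `j`. -/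
theorem perp_plane_at_farthest_point_supports {d : ℕ} (C : Set (Pt d)) (hC : IsBody C)
    (H : Set (Pt d)) (hH : Supports H C)
    (j : Pt d) (hjC : j ∈ C) (hjfar : ∀ c ∈ C, distPS c H ≤ distPS j H)
    (h : Pt d) (hproj : IsProj j H h)
    (J : Set (Pt d)) (hJ : IsHyperplane J) (hperp : IsProj h J j) :
    Supports J C ∧ J ∩ C = {j} := by
  obtain ⟨⟨v, hv, rfl⟩, -, hHint⟩ := hH
  obtain ⟨u, hu, rfl⟩ := hJ
  have hfar : ∀ c ∈ C, mink d v c.1 ^ 2 ≤ mink d v j.1 ^ 2 := fun c hc =>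
    (distPS_plane_le_iff hv c j).1 (hjfar c hc)
  obtain ⟨-, -, -, p₀, hp₀⟩ := hC
  have hα : mink d v j.1 ≠ 0 := fun h0 => hHint p₀ hp₀ <| pow_eq_zero_iff two_ne_zero |>.1 <|
    le_antisymm (by simpa [h0] using hfar p₀ hp₀.mem) (sq_nonneg _)
  have hJeq : plane u = {p | mink d v j.1 * mink d j.1 p.1 + mink d v p.1 = 0} :=
    plane_eq_of_foot_foot hv hu hα <| by
      rw [← eq_foot_of_isProj hv j hproj, ← eq_foot_of_isProj hu h hperp]
  have hJC : plane u ∩ C = {j} := by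
    refine Set.eq_singleton_iff_unique_mem.2 ⟨⟨hperp.1, hjC⟩, fun p ⟨hpJ, hpC⟩ => ?_⟩
    by_contra hne
    rw [hJeq] at hpJ
    exact (hfar p hpC).not_gt (sq_mink_lt_of_ne hα hpJ hne)
  refine ⟨⟨⟨u, hu, rfl⟩, ⟨j, hperp.1, hjC⟩, fun p hp hpJ => ?_⟩, hJC⟩
  obtain rfl : p = j := hJC.subset ⟨hpJ, hp.mem⟩
  obtain ⟨ε, hε, hball⟩ := hp
  obtain ⟨q, hq, hlt⟩ := exists_hdist_lt_sq_mink_lt hv hα hε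
  exact (hfar q (hball q hq)).not_gt hlt

end HypSpace
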